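/- The generating function S(x) for Schroeder paths satisfies S(x) = (1 - x - sqrt(1 - 6x + x^2))/(2x), and the series M with M(0)=1 satisfying M - 1 = x(M^3 + M^2) has coefficients [x^n]M = (1/n) * sum_{k=0}^{n-1} binomial(2n, k) * binomial(n, k+1) * 2^{k+1} for n >= 1. -/

import Mathlib

open PowerSeries

/-- A Schröder path of length `2n`: steps `U=(1,1)`, `D=(1,-1)`, `L=(2,0)`,
from `(0,0)` to `(2n,0)`, staying weakly above the x-axis. -/
def IsSchroederPath (n : ℕ) (p : List (ℤ × ℤ)) : Prop :=
  (∀ s ∈ p, s = ((1 : ℤ), (1 : ℤ)) ∨ s = ((1 : ℤ), (-1 : ℤ)) ∨ s = ((2 : ℤ), (0 : ℤ))) ∧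
  (p.map Prod.fst).sum = 2 * n ∧
  (p.map Prod.snd).sum = 0 ∧
  ∀ k, 0 ≤ ((p.take k).map Prod.snd).sum

/-!
Removing the first step of a Schröder path and, when it is an up step, cutting the rest at its
first return to the axis, shows that a path of length `2(n+1)` is uniquely `L q` or `U a D b`
with `a`, `b` of total length `2n`. Hence `S = 1 + x S + x S²`, and completing the square gives
`(1 - x - 2xS)² = 1 - 6x + x²`.

For the second part, `L = M - 1` satisfies `L = x φ(L)` with `φ(t) = (t + 1)² (t + 2)`, so
Lagrange inversion `(n + 1) [xⁿ⁺¹] L = [tⁿ] φ(t)ⁿ⁺¹` gives the binomial sum. Lagrange inversion is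
proved with `u = φ(L)`: expanding `uⁿ⁺¹ = φⁿ⁺¹(x u)` turns `[xⁿ] (x u)'` into
`∑ⱼ [tʲ] φⁿ⁺¹ · [xⁿ] (x u)' u⁻ⁿ⁻¹ (x u)ʲ`, and the last factor is `1` for `j = n` and `0` otherwise,
because for `m ≥ 1` the series `(x u)' u⁻ᵐ⁻¹ = u⁻ᵐ - x (u⁻ᵐ)' / m` has vanishing `m`-th coefficient.
-/

open Finset

namespace Schroeder

def IsStep (s : ℤ × ℤ) : Prop := s = (1, 1) ∨ s = (1, -1) ∨ s = (2, 0)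

def width (p : List (ℤ × ℤ)) : ℤ := (p.map Prod.fst).sum

def height (p : List (ℤ × ℤ)) : ℤ := (p.map Prod.snd).sum

@[simp] lemma width_nil : width [] = 0 := rfl

@[simp] lemma width_cons (s : ℤ × ℤ) (p : List (ℤ × ℤ)) : width (s :: p) = s.1 + width p := by
  simp [width]

@[simp] lemma width_append (p q : List (ℤ × ℤ)) : width (p ++ q) = width p + width q := by
  simp [width]

@[simp] lemma height_nil : height [] = 0 := rfl

@[simp] lemma height_cons (s : ℤ × ℤ) (p : List (ℤ × ℤ)) : height (s :: p) = s.2 + height p := by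
  simp [height]

@[simp] lemma height_append (p q : List (ℤ × ℤ)) : height (p ++ q) = height p + height q := by
  simp [height]

def StaysNonneg (p : List (ℤ × ℤ)) : Prop := ∀ k, 0 ≤ height (p.take k)

lemma isSchroederPath_iff {n : ℕ} {p : List (ℤ × ℤ)} :
    IsSchroederPath n p ↔
      (∀ s ∈ p, IsStep s) ∧ width p = 2 * n ∧ height p = 0 ∧ StaysNonneg p :=
  Iff.rfl

section Steps

variable {p : List (ℤ × ℤ)}

lemma length_le_width (hp : ∀ s ∈ p, IsStep s) : (p.length : ℤ) ≤ width p := by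
  induction p with
  | nil => simp
  | cons s t ih =>
    rw [List.forall_mem_cons] at hp
    have := ih hp.2
    rcases hp.1 with rfl | rfl | rfl <;> simp only [List.length_cons, width_cons] <;> omega

lemma even_width_add_height (hp : ∀ s ∈ p, IsStep s) : Even (width p + height p) := by
  induction p with
  | nil => simp
  | cons s t ih =>
    rw [List.forall_mem_cons] at hp
    obtain ⟨c, hc⟩ := ih hp.2
    rcases hp.1 with rfl | rfl | rfl <;> simp only [width_cons, height_cons]
    · exact ⟨c + 1, by omega⟩
    · exact ⟨c, by omega⟩
    · exact ⟨c + 1, by omega⟩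

lemma exists_width_eq_two_mul (hp : ∀ s ∈ p, IsStep s) (h0 : height p = 0) :
    ∃ i : ℕ, width p = 2 * i := by
  obtain ⟨c, hc⟩ := even_width_add_height hp
  have := length_le_width hp
  exact ⟨c.toNat, by omega⟩

end Steps

lemma finite_setOf_isSchroederPath (n : ℕ) : {p | IsSchroederPath n p}.Finite := by
  let S : Set (ℤ × ℤ) := {(1, 1), (1, -1), (2, 0)}
  refine ((List.finite_length_le S (2 * n)).image List.unattach).subset ?_
  intro p hpath
  obtain ⟨hp, hw, -⟩ := isSchroederPath_iff.1 hpath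
  refine ⟨p.attachWith (· ∈ S) hp, ?_, List.unattach_attachWith⟩
  have := length_le_width hp
  change (p.attachWith _ hp).length ≤ 2 * n
  rw [List.length_attachWith]
  omega

abbrev Paths (n : ℕ) := {p : List (ℤ × ℤ) // IsSchroederPath n p}

instance (n : ℕ) : Finite (Paths n) := (finite_setOf_isSchroederPath n).to_subtype

section StaysNonneg

variable {a b t : List (ℤ × ℤ)} {s : ℤ × ℤ}

lemma height_take_append (k : ℕ) :
    height ((a ++ b).take k) = height (a.take k) + height (b.take (k - a.length)) := by
  rw [List.take_append, height_append]

lemma StaysNonneg.append (ha : StaysNonneg a) (hb : StaysNonneg b) : StaysNonneg (a ++ b) :=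
  fun k => by rw [height_take_append]; linarith [ha k, hb (k - a.length)]

lemma staysNonneg_cons_iff : StaysNonneg (s :: t) ↔ ∀ k, 0 ≤ s.2 + height (t.take k) := by
  refine ⟨fun h k => by simpa using h (k + 1), fun h k => ?_⟩
  cases k with
  | zero => simp
  | succ k => simpa using h k

lemma StaysNonneg.up_append_down (ha : StaysNonneg a) :
    StaysNonneg ((1, 1) :: (a ++ [(1, -1)])) := by
  refine staysNonneg_cons_iff.2 fun k => ?_
  have : -1 ≤ height ([((1 : ℤ), (-1 : ℤ))].take (k - a.length)) := by
    cases k - a.length <;> simp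
  rw [height_take_append]
  linarith [ha k]

lemma exists_first_return (ht : ∀ s ∈ t, -1 ≤ s.2) (hneg : height t < 0) :
    ∃ a s b, t = a ++ s :: b ∧ s.2 = -1 ∧ height a = 0 ∧ StaysNonneg a := by
  classical
  have hex : ∃ k, height (t.take k) < 0 := ⟨t.length, by rwa [List.take_length]⟩
  obtain ⟨m, hm⟩ : ∃ m, Nat.find hex = m + 1 :=
    Nat.exists_eq_add_of_le' (Nat.pos_of_ne_zero fun h0 => by simpa [h0] using Nat.find_spec hex)
  have hbefore : ∀ k ≤ m, 0 ≤ height (t.take k) :=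
    fun k hk => not_lt.1 (Nat.find_min hex (by omega))
  have hlt : m < t.length := by
    by_contra! hle
    have := hbefore m le_rfl
    rw [List.take_of_length_le hle] at this
    exact this.not_gt hneg
  have hsplit : t = t.take m ++ t[m] :: t.drop (m + 1) := by
    rw [List.getElem_cons_drop, List.take_append_drop]
  have hstep : height (t.take (m + 1)) = height (t.take m) + t[m].2 := by
    rw [List.take_succ_eq_append_getElem hlt, height_append]; simp
  have := hbefore m le_rfl
  have := ht _ (List.getElem_mem hlt)
  have := hm ▸ Nat.find_spec hex
  refine ⟨t.take m, t[m], t.drop (m + 1), hsplit, by omega, by omega, fun k => ?_⟩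
  rw [List.take_take]
  exact hbefore _ (min_le_right _ _)

end StaysNonneg

section Decomposition

variable {n i j : ℕ} {p q a b a' b' t : List (ℤ × ℤ)}

lemma isSchroederPath_zero_iff : IsSchroederPath 0 p ↔ p = [] := by
  refine ⟨fun hp => ?_, by rintro rfl; exact ⟨by simp, by simp, by simp, fun k => by simp⟩⟩
  have := length_le_width hp.1
  have : width p = 0 := hp.2.1
  exact List.eq_nil_of_length_eq_zero (by omega)

lemma isSchroederPath_level_cons_iff :
    IsSchroederPath (n + 1) ((2, 0) :: q) ↔ IsSchroederPath n q := by
  simp only [isSchroederPath_iff, List.forall_mem_cons, staysNonneg_cons_iff, width_cons,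
    height_cons, zero_add]
  refine ⟨fun ⟨⟨_, hs⟩, hw, hh, hn⟩ => ⟨hs, by push_cast at hw; omega, hh, hn⟩,
    fun ⟨hs, hw, hh, hn⟩ => ⟨⟨by simp [IsStep], hs⟩, by push_cast; omega, hh, hn⟩⟩

lemma isSchroederPath_up_append_down (hij : i + j = n) (ha : IsSchroederPath i a)
    (hb : IsSchroederPath j b) : IsSchroederPath (n + 1) ((1, 1) :: (a ++ (1, -1) :: b)) := by
  subst hij
  obtain ⟨has, haw, hah, han⟩ := isSchroederPath_iff.1 ha
  obtain ⟨hbs, hbw, hbh, hbn⟩ := isSchroederPath_iff.1 hb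
  refine isSchroederPath_iff.2 ⟨?_, ?_, ?_, ?_⟩
  · simp only [List.forall_mem_cons, List.forall_mem_append]
    exact ⟨by simp [IsStep], has, by simp [IsStep], hbs⟩
  · simp only [width_cons, width_append, haw, hbw]
    push_cast
    ring
  · simp [hah, hbh]
  · simpa using han.up_append_down.append hbn

lemma length_le_of_append_down_eq (ha : height a = 0) (ha' : StaysNonneg a')
    (h : a ++ (1, -1) :: b = a' ++ (1, -1) :: b') : a'.length ≤ a.length := by
  by_contra! hlt
  have hpre : a'.take (a.length + 1) = a ++ [(1, -1)] := by
    have := congrArg (List.take (a.length + 1)) h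
    rw [List.take_append_of_le_length hlt] at this
    simpa [List.take_append, List.take_of_length_le] using this.symm
  have := ha' (a.length + 1)
  rw [hpre] at this
  simp [ha] at this

lemma eq_of_append_down_eq (ha : height a = 0) (han : StaysNonneg a) (ha' : height a' = 0)
    (han' : StaysNonneg a') (h : a ++ (1, -1) :: b = a' ++ (1, -1) :: b') : a = a' ∧ b = b' := by
  have hlen : a.length = a'.length :=
    le_antisymm (length_le_of_append_down_eq ha' han h.symm) (length_le_of_append_down_eq ha han' h)
  obtain ⟨rfl, hb⟩ := List.append_inj h hlen
  exact ⟨rfl, List.cons_injective hb⟩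

lemma exists_of_isSchroederPath_up_cons (hp : IsSchroederPath (n + 1) ((1, 1) :: t)) :
    ∃ i j a b, i + j = n ∧ IsSchroederPath i a ∧ IsSchroederPath j b ∧
      t = a ++ (1, -1) :: b := by
  obtain ⟨hs, hw, hh, hn⟩ := isSchroederPath_iff.1 hp
  rw [List.forall_mem_cons] at hs
  rw [staysNonneg_cons_iff] at hn
  have hdown : ∀ s ∈ t, -1 ≤ s.2 := fun s hs' => by
    rcases hs.2 s hs' with rfl | rfl | rfl <;> simp
  have hneg : height t < 0 := by
    simp only [height_cons] at hh
    omega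
  obtain ⟨a, s, b, rfl, hs2, hah, han⟩ := exists_first_return hdown hneg
  have has : ∀ x ∈ a, IsStep x := fun x hx => hs.2 x (by simp [hx])
  have hbs : ∀ x ∈ b, IsStep x := fun x hx => hs.2 x (by simp [hx])
  obtain rfl : s = (1, -1) := by
    rcases hs.2 s (by simp) with rfl | rfl | rfl <;> simp_all
  have hbh : height b = 0 := by simp only [height_cons, height_append, hah] at hh; omega
  have hbn : StaysNonneg b := fun k => by
    have := hn (a.length + (k + 1))
    rw [height_take_append, List.take_of_length_le (by omega)] at this
    simpa [hah] using this
  obtain ⟨i, hi⟩ := exists_width_eq_two_mul has hah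
  obtain ⟨j, hj⟩ := exists_width_eq_two_mul hbs hbh
  refine ⟨i, j, a, b, ?_, ⟨has, hi, hah, han⟩, ⟨hbs, hj, hbh, hbn⟩, rfl⟩
  simp only [width_cons, width_append, hi, hj] at hw
  omega

end Decomposition

def assemble (n : ℕ) :
    Paths n ⊕ (Σ ij : antidiagonal n, Paths ij.1.1 × Paths ij.1.2) → Paths (n + 1)
  | .inl q => ⟨(2, 0) :: q.1, isSchroederPath_level_cons_iff.2 q.2⟩
  | .inr ⟨ij, a, b⟩ => ⟨(1, 1) :: (a.1 ++ (1, -1) :: b.1),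
      isSchroederPath_up_append_down (mem_antidiagonal.1 ij.2) a.2 b.2⟩

lemma assemble_injective (n : ℕ) : Function.Injective (assemble n) := by
  rintro (q | ⟨⟨⟨i, j⟩, hij⟩, a, b⟩) (q' | ⟨⟨⟨i', j'⟩, hij'⟩, a', b'⟩) h <;>
    simp only [assemble, Subtype.mk.injEq, List.cons.injEq, Prod.mk.injEq] at h
  · exact congrArg Sum.inl (Subtype.ext h.2)
  · norm_num at h
  · norm_num at h
  · obtain ⟨-, hwa, hha, hna⟩ := isSchroederPath_iff.1 a.2
    obtain ⟨-, hwa', hha', hna'⟩ := isSchroederPath_iff.1 a'.2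
    obtain ⟨-, hwb, -⟩ := isSchroederPath_iff.1 b.2
    obtain ⟨-, hwb', -⟩ := isSchroederPath_iff.1 b'.2
    dsimp only at hwa hwa' hwb hwb'
    obtain ⟨ha, hb⟩ := eq_of_append_down_eq hha hna hha' hna' h.2
    obtain rfl : i = i' := by rw [ha] at hwa; omega
    obtain rfl : j = j' := by rw [hb] at hwb; omega
    obtain rfl := Subtype.ext ha
    obtain rfl := Subtype.ext hb
    rfl

lemma assemble_surjective (n : ℕ) : Function.Surjective (assemble n) := by
  rintro ⟨p, hp⟩
  obtain ⟨hs, hw, -, hn⟩ := isSchroederPath_iff.1 hp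
  rcases p with _ | ⟨s, t⟩
  · rw [width_nil] at hw
    omega
  rcases hs s List.mem_cons_self with rfl | rfl | rfl
  · obtain ⟨i, j, a, b, hij, ha, hb, rfl⟩ := exists_of_isSchroederPath_up_cons hp
    exact ⟨.inr ⟨⟨(i, j), mem_antidiagonal.2 hij⟩, ⟨a, ha⟩, ⟨b, hb⟩⟩, rfl⟩
  · simpa using hn 1
  · exact ⟨.inl ⟨t, isSchroederPath_level_cons_iff.1 hp⟩, rfl⟩

lemma card_paths_zero : Nat.card (Paths 0) = 1 := by
  simp only [Paths, isSchroederPath_zero_iff, Nat.card_unique]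

lemma card_paths_succ (n : ℕ) :
    Nat.card (Paths (n + 1)) =
      Nat.card (Paths n) +
        ∑ ij ∈ antidiagonal n, Nat.card (Paths ij.1) * Nat.card (Paths ij.2) := by
  rw [← Nat.card_eq_of_bijective _ ⟨assemble_injective n, assemble_surjective n⟩, Nat.card_sum,
    Nat.card_sigma, ← sum_coe_sort (antidiagonal n)]
  simp only [Nat.card_prod]

variable (R : Type*) [CommRing R]

noncomputable def series : R⟦X⟧ := mk fun n => (Nat.card (Paths n) : R)

lemma series_eq : series R = 1 + X * series R + X * series R ^ 2 := by
  ext (_ | n)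
  · simp [series, card_paths_zero]
  · rw [map_add, map_add, coeff_succ_X_mul, coeff_succ_X_mul, sq, coeff_mul]
    simp [series, card_paths_succ]

lemma sq_one_sub_X_sub_two_X_mul_series :
    (1 - X - 2 * X * series R) ^ 2 = 1 - 6 * X + X ^ 2 := by
  linear_combination (-4 * X) * series_eq R

end Schroeder

lemma coeff_X_add_one_pow_mul_X_add_two_pow {R : Type*} [CommSemiring R] (n : ℕ) :
    ((Polynomial.X + 1) ^ (2 * (n + 1)) * (Polynomial.X + 2) ^ (n + 1) : Polynomial R).coeff n =
      ∑ k ∈ range (n + 1),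
        ((2 * (n + 1)).choose k : R) * ((n + 1).choose (k + 1) : R) * 2 ^ (k + 1) := by
  rw [Polynomial.coeff_mul, Nat.sum_antidiagonal_eq_sum_range_succ_mk]
  refine sum_congr rfl fun k hk => ?_
  have hkn : k ≤ n := Nat.lt_succ_iff.1 (mem_range.1 hk)
  rw [← Polynomial.C_1, ← Polynomial.C_ofNat, Polynomial.coeff_X_add_C_pow,
    Polynomial.coeff_X_add_C_pow, one_pow, one_mul, show n + 1 - (n - k) = k + 1 by omega,
    Nat.choose_symm_of_eq_add (by omega : n + 1 = n - k + (k + 1))]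
  ring

section

lemma coeff_X_mul_derivative {R : Type*} [CommSemiring R] (f : R⟦X⟧) (m : ℕ) :
    coeff m (X * d⁄dX R f) = m * coeff m f := by
  cases m with
  | zero => simp
  | succ m => rw [coeff_succ_X_mul, coeff_derivative]; push_cast; ring

variable {K : Type*} [Field K] [CharZero K]

lemma coeff_derivative_X_mul_mul_inv_pow {u : K⟦X⟧} (hu : constantCoeff u ≠ 0) (m : ℕ) :
    coeff m (d⁄dX K (X * u) * u⁻¹ ^ (m + 1)) = if m = 0 then 1 else 0 := by
  have huw : u * u⁻¹ = 1 := PowerSeries.mul_inv_cancel u hu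
  have hdXu : d⁄dX K (X * u) = u + X * d⁄dX K u := by
    simp only [Derivation.leibniz, smul_eq_mul, derivative_X, mul_one]
    ring
  split_ifs with hm
  · subst hm
    simp [coeff_zero_eq_constantCoeff, hdXu, hu]
  · have key : C (m : K) * (d⁄dX K (X * u) * u⁻¹ ^ (m + 1)) =
        C (m : K) * u⁻¹ ^ m - X * d⁄dX K (u⁻¹ ^ m) := by
      obtain ⟨k, rfl⟩ := Nat.exists_eq_add_of_le' (Nat.pos_of_ne_zero hm)
      rw [Derivation.leibniz_pow, derivative_inv', hdXu]
      simp only [Nat.add_sub_cancel, nsmul_eq_mul, smul_eq_mul, map_natCast]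
      push_cast
      linear_combination ((k + 1 : K⟦X⟧) * u⁻¹ ^ (k + 1)) * huw
    have := congrArg (coeff m) key
    rw [coeff_C_mul, map_sub, coeff_C_mul, coeff_X_mul_derivative, sub_self] at this
    exact (mul_eq_zero.1 this).resolve_left (Nat.cast_ne_zero.2 hm)

lemma coeff_derivative_X_mul_mul_inv_pow_mul_pow {u : K⟦X⟧} (hu : constantCoeff u ≠ 0)
    (n j : ℕ) :
    coeff n (d⁄dX K (X * u) * u⁻¹ ^ (n + 1) * (X * u) ^ j) = if j = n then 1 else 0 := by
  rcases le_or_gt j n with hjn | hnj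
  · obtain ⟨m, rfl⟩ := Nat.exists_eq_add_of_le hjn
    rw [add_comm j m]
    have hcancel : u⁻¹ ^ (m + j + 1) * u ^ j = u⁻¹ ^ (m + 1) := by
      rw [add_right_comm, pow_add, mul_assoc, ← mul_pow, PowerSeries.inv_mul_cancel u hu,
        one_pow, mul_one]
    calc coeff (m + j) (d⁄dX K (X * u) * u⁻¹ ^ (m + j + 1) * (X * u) ^ j)
        = coeff (m + j) (X ^ j * (d⁄dX K (X * u) * u⁻¹ ^ (m + 1))) := by
          rw [← hcancel, mul_pow]; ring_nf
      _ = if j = m + j then 1 else 0 := by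
          rw [coeff_X_pow_mul, coeff_derivative_X_mul_mul_inv_pow hu]; simp
  · rw [if_neg hnj.ne', mul_pow, mul_left_comm, coeff_X_pow_mul', if_neg (not_le.2 hnj)]

theorem coeff_succ_X_mul_of_aeval_eq_pow {u : K⟦X⟧} (hu : constantCoeff u ≠ 0) {n : ℕ}
    {Φ : Polynomial K} (hΦ : Polynomial.aeval (X * u) Φ = u ^ (n + 1)) :
    (n + 1 : K) * coeff (n + 1) (X * u) = Φ.coeff n := by
  have hdeg : Φ.natDegree < Φ.natDegree + n + 1 := by omega
  have hn : n ∈ range (Φ.natDegree + n + 1) := mem_range.2 (by omega)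
  calc (n + 1 : K) * coeff (n + 1) (X * u)
      = coeff n (d⁄dX K (X * u) * u⁻¹ ^ (n + 1) * u ^ (n + 1)) := by
        rw [mul_assoc, ← mul_pow, PowerSeries.inv_mul_cancel u hu, one_pow, mul_one,
          coeff_derivative, mul_comm]
    _ = ∑ j ∈ range (Φ.natDegree + n + 1),
          Φ.coeff j * coeff n (d⁄dX K (X * u) * u⁻¹ ^ (n + 1) * (X * u) ^ j) := by
        rw [← hΦ, Polynomial.aeval_eq_sum_range' hdeg, mul_sum, map_sum]
        simp only [mul_smul_comm, map_smul, smul_eq_mul]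
    _ = Φ.coeff n := by
        simp only [coeff_derivative_X_mul_mul_inv_pow_mul_pow hu, mul_ite, mul_one, mul_zero,
          sum_ite_eq', if_pos hn]

theorem lagrange_inversion {φ : Polynomial K} (hφ : φ.coeff 0 ≠ 0) {L : K⟦X⟧}
    (hL : L = X * Polynomial.aeval L φ) (n : ℕ) :
    (n + 1 : K) * coeff (n + 1) L = (φ ^ (n + 1)).coeff n := by
  have hL0 : constantCoeff L = 0 := by rw [hL]; simp
  have hu : constantCoeff (Polynomial.aeval L φ) ≠ 0 := by
    rwa [Polynomial.aeval_def, Polynomial.hom_eval₂, hL0, Polynomial.eval₂_at_zero]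
  rw [hL]
  exact coeff_succ_X_mul_of_aeval_eq_pow hu (by rw [← hL, map_pow])

theorem coeff_succ_of_sub_one_eq_X_mul {M : K⟦X⟧}
    (hM : M - 1 = X * (M ^ 3 + M ^ 2)) (n : ℕ) :
    (n + 1 : K) * coeff (n + 1) M =
      ∑ k ∈ range (n + 1),
        ((2 * (n + 1)).choose k : K) * ((n + 1).choose (k + 1) : K) * 2 ^ (k + 1) := by
  set φ : Polynomial K := (Polynomial.X + 1) ^ 2 * (Polynomial.X + 2)
  have hφ : φ.coeff 0 ≠ 0 := by simp [φ, Polynomial.coeff_zero_eq_eval_zero]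
  have hL : M - 1 = X * Polynomial.aeval (M - 1) φ := by
    have : Polynomial.aeval (M - 1) φ = M ^ 3 + M ^ 2 := by
      simp only [φ, map_mul, map_pow, map_add, Polynomial.aeval_X, map_one, sub_add_cancel,
        map_ofNat]
      ring
    rwa [this]
  have hcoeff : coeff (n + 1) (M - 1) = coeff (n + 1) M := by simp
  rw [← hcoeff, lagrange_inversion hφ hL, ← coeff_X_add_one_pow_mul_X_add_two_pow, mul_pow,
    ← pow_mul]

end

/-- the generating function `S` of Schröder paths satisfies
`S = (1 - x - √(1-6x+x²))/(2x)` (equivalently `(1 - x - 2xS)² = 1 - 6x + x²`),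
and the power series `M` with `M(0) = 1` and `M - 1 = x(M³ + M²)` has
coefficients `[xⁿ]M = (1/n) ∑_{k=0}^{n-1} C(2n,k) C(n,k+1) 2^{k+1}`, `n ≥ 1`. -/
theorem schroeder_gf_and_coloured_coeff :
    ((1 - PowerSeries.X - 2 * PowerSeries.X *
        (PowerSeries.mk fun n =>
          (Nat.card {p : List (ℤ × ℤ) // IsSchroederPath n p} : ℚ))) ^ 2 =
      1 - 6 * PowerSeries.X + PowerSeries.X ^ 2) ∧
    ∀ M : PowerSeries ℚ, PowerSeries.constantCoeff M = 1 →
      M - 1 = PowerSeries.X * (M ^ 3 + M ^ 2) →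
      ∀ n : ℕ, 1 ≤ n →
        PowerSeries.coeff n M =
          (1 / (n : ℚ)) * ∑ k ∈ Finset.range n,
            ((2 * n).choose k : ℚ) * (n.choose (k + 1) : ℚ) * 2 ^ (k + 1) := by
  refine ⟨Schroeder.sq_one_sub_X_sub_two_X_mul_series ℚ, fun M _ hM n hn => ?_⟩
  obtain ⟨m, rfl⟩ := Nat.exists_eq_add_of_le' hn
  rw [← coeff_succ_of_sub_one_eq_X_mul hM m]
  field_simp
  push_cast
  ring
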